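/- Let (𝔙, 𝔙⁺, 𝔢) be a local 𝔉-order unit bimodule with associated norm ‖·‖, and let 𝔲, 𝔳 ∈ 𝔙⁺ with ‖𝔲‖ = ‖𝔳‖ = 1. Then 𝔲 ⊥_∞ 𝔳 if and only if ‖𝔲 + 𝔳‖ = 1. -/

import Mathlib

noncomputable section

open scoped Matrix.Norms.L2Operator

/-! ### The *-algebra 𝔉 of ∞×∞ complex matrices with finitely many nonzero entries -/

/-- `∞ × ∞` complex matrices (indexed by `ℕ × ℕ`). -/
abbrev FMat := ℕ → ℕ → ℂ

/-- The matrix has (at most) finitely many nonzero entries: it is supported in some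
`n × n` top-left block. -/
def IsFin (a : FMat) : Prop := ∃ n, ∀ i j, (n ≤ i ∨ n ≤ j) → a i j = 0

/-- Matrix multiplication in `𝔉` (the `tsum` is a finite sum for finitely supported
matrices). -/
def fmul (a b : FMat) : FMat := fun i k => ∑' j, a i j * b j k

/-- The involution (conjugate transpose) on `𝔉`. -/
def fstar (a : FMat) : FMat := fun i j => starRingEnd ℂ (a j i)

/-- The matrix unit `𝔢_{i,j}`. -/
def eUnit (i j : ℕ) : FMat := fun k l => if k = i ∧ l = j then 1 else 0

/-- `𝔍ₙ = Σ_{i<n} 𝔢_{i,i}`, the partial identities. -/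
def JMat (n : ℕ) : FMat := fun k l => if k = l ∧ k < n then 1 else 0

/-- `𝔎ₙ = Σ_{i<n} 𝔢_{i,n+i}`, used for `2×2`-block constructions. -/
def KMat (n : ℕ) : FMat := fun k l => if l = k + n ∧ k < n then 1 else 0

/-- The diagonal idempotent `Σ_{i ∈ s} 𝔢_{i,i}` associated to a finite set `s ⊂ ℕ`. -/
def finsetDiag (s : Finset ℕ) : FMat := fun k l => if k = l ∧ k ∈ s then 1 else 0

/-- The operator norm on `𝔉`: the supremum of the (C*-algebra) operator norms of the
finite top-left blocks (for a finitely supported matrix the blocks stabilize). -/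
def fnorm (a : FMat) : ℝ :=
  ⨆ n : ℕ, ‖(Matrix.of fun i j : Fin n => a i j : Matrix (Fin n) (Fin n) ℂ)‖

/-- The order `o(𝔞)` of a finitely supported matrix: the least `n` such that `𝔞` is
supported in the top-left `n × n` block. -/
def matOrd (a : FMat) : ℕ := sInf {n | ∀ i j, (n ≤ i ∨ n ≤ j) → a i j = 0}

/-- A local unitary in `𝔉`: `𝔞*𝔞 = 𝔍_{o(𝔞)} = 𝔞𝔞*`. -/
def IsLocalUnitary (a : FMat) : Prop :=
  IsFin a ∧ fmul (fstar a) a = JMat (matOrd a) ∧ fmul a (fstar a) = JMat (matOrd a)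

/-! ### Non-degenerate *-𝔉-bimodules -/

/-- A non-degenerate `*`-`𝔉`-bimodule structure on a complex vector space `V`:
left and right actions of (finitely supported) infinite matrices together with an
involution, compatible with each other and with the complex scalars, such that every
element is `𝔍ₙ·v·𝔍ₙ` for some `n`. -/
structure FBimod (V : Type*) [AddCommGroup V] [Module ℂ V] where
  lsmul : FMat → V → V
  rsmul : V → FMat → V
  star : V → V
  lsmul_add : ∀ a u v, lsmul a (u + v) = lsmul a u + lsmul a v
  rsmul_add : ∀ u v b, rsmul (u + v) b = rsmul u b + rsmul v b
  add_lsmul : ∀ a b v, IsFin a → IsFin b → lsmul (a + b) v = lsmul a v + lsmul b v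
  rsmul_add' : ∀ v a b, IsFin a → IsFin b → rsmul v (a + b) = rsmul v a + rsmul v b
  smul_lsmul : ∀ (c : ℂ) a v, IsFin a → lsmul (c • a) v = c • lsmul a v
  smul_rsmul : ∀ (c : ℂ) v a, IsFin a → rsmul v (c • a) = c • rsmul v a
  mul_lsmul : ∀ a b v, IsFin a → IsFin b → lsmul (fmul a b) v = lsmul a (lsmul b v)
  rsmul_mul : ∀ v a b, IsFin a → IsFin b → rsmul v (fmul a b) = rsmul (rsmul v a) b
  lsmul_rsmul : ∀ a v b, IsFin a → IsFin b → rsmul (lsmul a v) b = lsmul a (rsmul v b)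
  star_add : ∀ u v, star (u + v) = star u + star v
  star_star : ∀ v, star (star v) = v
  star_lsmul : ∀ a v, IsFin a → star (lsmul a v) = rsmul (star v) (fstar a)
  star_rsmul : ∀ v a, IsFin a → star (rsmul v a) = lsmul (fstar a) (star v)
  smul_compat : ∀ (c : ℂ) (n : ℕ) v, lsmul (JMat n) (rsmul v (JMat n)) = v →
    lsmul (c • JMat n) v = c • v
  nondeg : ∀ v, ∃ n, lsmul (JMat n) (rsmul v (JMat n)) = v

namespace FBimod

variable {V : Type*} [AddCommGroup V] [Module ℂ V] (M : FBimod V)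

/-- `𝔍ₙ 𝔳 𝔍ₙ`. -/
def cut (n : ℕ) (v : V) : V := M.lsmul (JMat n) (M.rsmul v (JMat n))

/-- The order `o(𝔳)`: the smallest `n` with `𝔍ₙ 𝔳 𝔍ₙ = 𝔳`. -/
def ord (v : V) : ℕ := sInf {n | M.cut n v = v}

/-- `𝔞* 𝔳 𝔞`. -/
def conj (a : FMat) (v : V) : V := M.lsmul (fstar a) (M.rsmul v a)

/-- `C` is a bimodule cone: consists of self-adjoint elements, is closed under
addition and under `𝔳 ↦ 𝔞*𝔳𝔞` for `𝔞 ∈ 𝔉`. -/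
def IsCone (C : Set V) : Prop :=
  (∀ v ∈ C, M.star v = v) ∧ (∀ u ∈ C, ∀ v ∈ C, u + v ∈ C) ∧
    (∀ v ∈ C, ∀ a : FMat, IsFin a → M.conj a v ∈ C)

/-- The cone `C` is proper: `C ∩ (−C) = {0}`. -/
def ConeProper (C : Set V) : Prop := ∀ v ∈ C, -v ∈ C → v = 0

/-- The cone `C` is Archimedean. -/
def ConeArch (C : Set V) : Prop :=
  ∀ u ∈ C, ∀ v : V, M.star v = v → (∀ k : ℝ, 0 < k → (k : ℂ) • u + v ∈ C) → v ∈ C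

/-- The cone `C` is generating. -/
def ConeGen (C : Set V) : Prop :=
  ∀ v : V, ∃ v₀ ∈ C, ∃ v₁ ∈ C, ∃ v₂ ∈ C, ∃ v₃ ∈ C,
    v = v₀ + Complex.I • v₁ - v₂ - Complex.I • v₃

/-- `(𝔳₁, 𝔳₂)ₙ⁺ = 𝔳₁ + 𝔎ₙ* 𝔳₂ 𝔎ₙ` (the diagonal `2×2`-block `diag(𝔳₁,𝔳₂)`). -/
def pairPlus (n : ℕ) (v₁ v₂ : V) : V :=
  v₁ + M.lsmul (fstar (KMat n)) (M.rsmul v₂ (KMat n))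

/-- `saₙ(𝔳) = 𝔍ₙ 𝔳 𝔎ₙ + 𝔎ₙ* 𝔳* 𝔍ₙ` (the off-diagonal `2×2`-block of `𝔳`). -/
def san (n : ℕ) (v : V) : V :=
  M.lsmul (JMat n) (M.rsmul v (KMat n)) +
    M.lsmul (fstar (KMat n)) (M.rsmul (M.star v) (JMat n))

/-- `𝔲` and `𝔳` are `𝔉`-independent: compressed onto disjoint diagonal blocks. -/
def FIndep (u v : V) : Prop :=
  ∃ I J : Finset ℕ, Disjoint I J ∧
    M.lsmul (finsetDiag I) (M.rsmul u (finsetDiag I)) = u ∧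
    M.lsmul (finsetDiag J) (M.rsmul v (finsetDiag J)) = v

/-- `(𝔙, C, abs)` is a non-degenerate absolutely ordered `𝔉`-bimodule
(Definition 18 of the paper). -/
structure IsAbsOrd (C : Set V) (abs : V → V) : Prop where
  cone : M.IsCone C
  abs_mem : ∀ v, abs v ∈ C
  ord_abs_le : ∀ v, M.ord (abs v) ≤ M.ord v
  abs_of_mem : ∀ v ∈ C, abs v = v
  pos_part : ∀ v, M.pairPlus (M.ord v) (abs (M.star v)) (abs v) + M.san (M.ord v) v ∈ C
  abs_smul_le : ∀ (a b : FMat), IsFin a → IsFin b → ∀ v,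
    (fnorm a : ℂ) • abs (M.rsmul (abs v) b) - abs (M.lsmul a (M.rsmul v b)) ∈ C
  indep_add : ∀ u v, M.FIndep u v → abs (u + v) = abs u + abs v
  absorb : ∀ u ∈ C, ∀ v ∈ C, ∀ w ∈ C, abs (u - v) = u + v → v - w ∈ C →
    abs (u - w) = u + w
  ortho_pm : ∀ u ∈ C, ∀ v ∈ C, ∀ w ∈ C, abs (u - v) = u + v → abs (u - w) = u + w →
    abs (u - abs (v + w)) = u + abs (v + w) ∧ abs (u - abs (v - w)) = u + abs (v - w)

/-- `eⁿ = Σ_{i<n} 𝔢_{i,0} 𝔢 𝔢_{0,i}` for an element `𝔢` of order `1`. -/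
def epow (e : V) (n : ℕ) : V :=
  ∑ i ∈ Finset.range n, M.lsmul (eUnit i 0) (M.rsmul e (eUnit 0 i))

/-- `𝔢` is a local order unit for `(𝔙, C)`. -/
def IsLocalOrderUnit (C : Set V) (e : V) : Prop :=
  e ∈ C ∧ M.cut 1 e = e ∧ ∀ v : V, M.cut 1 v = v → ∃ k : ℝ, 0 < k ∧
    M.pairPlus 1 ((k : ℂ) • e) ((k : ℂ) • e) + M.san 1 v ∈ C

/-- `(𝔙, C, 𝔢)` is a local `𝔉`-order unit bimodule. -/
def IsLocalUnitBimod (C : Set V) (e : V) : Prop :=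
  M.IsCone C ∧ ConeProper C ∧ M.ConeArch C ∧ M.IsLocalOrderUnit C e

/-- The norm associated to a local order unit:
`‖𝔳‖ = inf { k > 0 : (k𝔢^{o(𝔳)}, k𝔢^{o(𝔳)})⁺_{o(𝔳)} + sa_{o(𝔳)}(𝔳) ∈ C }`. -/
def lnorm (C : Set V) (e : V) (v : V) : ℝ :=
  sInf {k : ℝ | 0 < k ∧
    M.pairPlus (M.ord v) ((k : ℂ) • M.epow e (M.ord v)) ((k : ℂ) • M.epow e (M.ord v)) +
      M.san (M.ord v) v ∈ C}

/-- `𝔲 ⊥_∞ 𝔳` with respect to the local-order-unit norm. -/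
def PerpInf (C : Set V) (e : V) (u v : V) : Prop :=
  ∀ k₁ k₂ : ℝ, M.lnorm C e ((k₁ : ℂ) • u + (k₂ : ℂ) • v) =
    max (M.lnorm C e ((k₁ : ℂ) • u)) (M.lnorm C e ((k₂ : ℂ) • v))

end FBimod
/-! ### Matrices over a complex *-vector space -/

section MatrixLevel

variable {V : Type*} [AddCommGroup V] [Module ℂ V] [StarAddMonoid V] [StarModule ℂ V]

/-- Conjugate transpose of a rectangular matrix over a `*`-vector space. -/
def mstar {m n : ℕ} (v : Matrix (Fin m) (Fin n) V) : Matrix (Fin n) (Fin m) V :=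
  fun i j => star (v j i)

/-- Left action of a scalar matrix: `(a v)_{ij} = Σ_k a_{ik} v_{kj}`. -/
def aSmul {r m n : ℕ} (a : Matrix (Fin r) (Fin m) ℂ) (v : Matrix (Fin m) (Fin n) V) :
    Matrix (Fin r) (Fin n) V :=
  fun i j => ∑ k, a i k • v k j

/-- Right action of a scalar matrix: `(v b)_{ij} = Σ_k b_{kj} • v_{ik}`. -/
def smulB {m n s : ℕ} (v : Matrix (Fin m) (Fin n) V) (b : Matrix (Fin n) (Fin s) ℂ) :
    Matrix (Fin m) (Fin s) V :=
  fun i j => ∑ k, b k j • v i k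

/-- Direct sum (block diagonal) of rectangular matrices over `V`. -/
def dsum {m n r s : ℕ} (v : Matrix (Fin m) (Fin n) V) (w : Matrix (Fin r) (Fin s) V) :
    Matrix (Fin (m + r)) (Fin (n + s)) V :=
  fun i j =>
    if hi : (i : ℕ) < m then
      (if hj : (j : ℕ) < n then v ⟨i, hi⟩ ⟨j, hj⟩ else 0)
    else
      (if hj : (j : ℕ) < n then 0
       else w ⟨(i : ℕ) - m, by have := i.isLt; omega⟩ ⟨(j : ℕ) - n, by have := j.isLt; omega⟩)

end MatrixLevel

/-- The L2-operator norm of a rectangular complex scalar matrix. -/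
def cnorm {r m : ℕ} (a : Matrix (Fin r) (Fin m) ℂ) : ℝ := ‖a‖

/-- Embedding of a finite rectangular complex matrix into `𝔉`. -/
def embC {r m : ℕ} (a : Matrix (Fin r) (Fin m) ℂ) : FMat :=
  fun i j => if hi : i < r then (if hj : j < m then a ⟨i, hi⟩ ⟨j, hj⟩ else 0) else 0

/-- `e ⊕ ⋯ ⊕ e`: the diagonal matrix with constant diagonal `e`. -/
def diagE {V : Type*} [AddCommGroup V] (e : V) (n : ℕ) : Matrix (Fin n) (Fin n) V :=
  Matrix.of fun i j => if i = j then e else 0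

/-! ### Absolutely matrix ordered spaces and absolute matrix order unit spaces -/

/-- An absolutely matrix ordered space structure on a complex `*`-vector space `V`:
matrix cones `Mₙ(V)⁺` and absolute values `|·|_{m,n} : M_{m,n}(V) → Mₙ(V)⁺`
(Definition 4.1 of Karn-Kumar). -/
structure AMOS (V : Type*) [AddCommGroup V] [Module ℂ V] [StarAddMonoid V]
    [StarModule ℂ V] where
  pos : ∀ n : ℕ, Set (Matrix (Fin n) (Fin n) V)
  abs : ∀ m n : ℕ, Matrix (Fin m) (Fin n) V → Matrix (Fin n) (Fin n) V
  pos_star : ∀ n, ∀ v ∈ pos n, mstar v = v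
  pos_add : ∀ n, ∀ u ∈ pos n, ∀ v ∈ pos n, u + v ∈ pos n
  pos_conj : ∀ m n (a : Matrix (Fin n) (Fin m) ℂ), ∀ v ∈ pos n,
    aSmul a.conjTranspose (smulB v a) ∈ pos m
  abs_mem : ∀ m n v, abs m n v ∈ pos n
  abs_of_pos : ∀ n, ∀ v ∈ pos n, abs n n v = v
  abs_add_self : ∀ n (v : Matrix (Fin n) (Fin n) V), mstar v = v →
    abs n n v + v ∈ pos n ∧ abs n n v - v ∈ pos n
  abs_real_smul : ∀ n (k : ℝ) (v : Matrix (Fin n) (Fin n) V), mstar v = v →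
    abs n n ((k : ℂ) • v) = ((|k| : ℝ) : ℂ) • abs n n v
  absorb : ∀ n, ∀ u ∈ pos n, ∀ v ∈ pos n, ∀ w ∈ pos n,
    abs n n (u - v) = u + v → v - w ∈ pos n → abs n n (u - w) = u + w
  ortho_pm : ∀ n, ∀ u ∈ pos n, ∀ v ∈ pos n, ∀ w ∈ pos n,
    abs n n (u - v) = u + v → abs n n (u - w) = u + w →
    abs n n (u - abs n n (v + w)) = u + abs n n (v + w) ∧
      abs n n (u - abs n n (v - w)) = u + abs n n (v - w)
  abs_smul_le : ∀ (r m n s : ℕ) (α : Matrix (Fin r) (Fin m) ℂ)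
    (v : Matrix (Fin m) (Fin n) V) (β : Matrix (Fin n) (Fin s) ℂ),
    (cnorm α : ℂ) • abs n s (smulB (abs m n v) β) - abs r s (aSmul α (smulB v β)) ∈ pos s
  abs_dsum : ∀ (m n r s : ℕ) (v : Matrix (Fin m) (Fin n) V) (w : Matrix (Fin r) (Fin s) V),
    abs (m + r) (n + s) (dsum v w) = dsum (abs m n v) (abs r s w)

/-- A matrix order unit structure on top of an absolutely matrix ordered space:
an order unit `e` with `V⁺` proper and each `Mₙ(V)⁺` Archimedean. -/
structure AMOUS (V : Type*) [AddCommGroup V] [Module ℂ V] [StarAddMonoid V]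
    [StarModule ℂ V] extends AMOS V where
  e : V
  e_pos : diagE e 1 ∈ pos 1
  proper : ∀ v ∈ pos 1, -v ∈ pos 1 → v = 0
  arch : ∀ n (v : Matrix (Fin n) (Fin n) V), mstar v = v →
    (∀ k : ℝ, 0 < k → (k : ℂ) • diagE e n + v ∈ pos n) →
    v ∈ pos n
  unit : ∀ n (v : Matrix (Fin n) (Fin n) V), mstar v = v →
    ∃ k : ℝ, 0 < k ∧ (k : ℂ) • diagE e n - v ∈ pos n ∧
      (k : ℂ) • diagE e n + v ∈ pos n

namespace AMOUS

variable {V : Type*} [AddCommGroup V] [Module ℂ V] [StarAddMonoid V] [StarModule ℂ V]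
variable (A : AMOUS V)

/-- `eⁿ = e ⊕ ⋯ ⊕ e ∈ Mₙ(V)`. -/
def eN (n : ℕ) : Matrix (Fin n) (Fin n) V := diagE A.e n

/-- The `2n × 2n` matrix `[[a, b], [c, d]]` of `n × n` blocks. -/
def block2 {n : ℕ} (a b c d : Matrix (Fin n) (Fin n) V) :
    Matrix (Fin (n + n)) (Fin (n + n)) V :=
  fun i j =>
    if hi : (i : ℕ) < n then
      (if hj : (j : ℕ) < n then a ⟨i, hi⟩ ⟨j, hj⟩
       else b ⟨i, hi⟩ ⟨(j : ℕ) - n, by have := j.isLt; omega⟩)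
    else
      (if hj : (j : ℕ) < n then c ⟨(i : ℕ) - n, by have := i.isLt; omega⟩ ⟨j, hj⟩
       else d ⟨(i : ℕ) - n, by have := i.isLt; omega⟩ ⟨(j : ℕ) - n, by have := j.isLt; omega⟩)

end AMOUS
namespace AMOUS

variable {V : Type*} [AddCommGroup V] [Module ℂ V] [StarAddMonoid V] [StarModule ℂ V]
variable (A : AMOUS V)

/-- The matrix norms of a matrix order unit space:
`‖v‖ₙ = inf { k > 0 : [[k eⁿ, v], [v*, k eⁿ]] ∈ M₂ₙ(V)⁺ }`. -/
def mnorm (n : ℕ) (v : Matrix (Fin n) (Fin n) V) : ℝ :=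
  sInf {k : ℝ | 0 < k ∧
    block2 ((k : ℂ) • A.eN n) v (mstar v) ((k : ℂ) • A.eN n) ∈ A.pos (n + n)}

/-- Orthogonality `u ⊥ v` (for positive elements): `|u − v| = u + v`. -/
def Perp {n : ℕ} (u v : Matrix (Fin n) (Fin n) V) : Prop :=
  A.abs n n (u - v) = u + v

/-- `u ⊥_∞ v`: `‖k₁ u + k₂ v‖ = max {‖k₁ u‖, ‖k₂ v‖}` for all real `k₁, k₂`. -/
def PerpInfM {n : ℕ} (u v : Matrix (Fin n) (Fin n) V) : Prop :=
  ∀ k₁ k₂ : ℝ, A.mnorm n ((k₁ : ℂ) • u + (k₂ : ℂ) • v) =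
    max (A.mnorm n ((k₁ : ℂ) • u)) (A.mnorm n ((k₂ : ℂ) • v))

/-- `u ⊥_∞^a v`: absolute `∞`-orthogonality. -/
def PerpInfA {n : ℕ} (u v : Matrix (Fin n) (Fin n) V) : Prop :=
  ∀ u₁ ∈ A.pos n, ∀ v₁ ∈ A.pos n, u - u₁ ∈ A.pos n → v - v₁ ∈ A.pos n → A.PerpInfM u₁ v₁

/-- `(V, {Mₙ(V)⁺}, {|·|}, e)` is an absolute matrix order unit space:
`⊥ = ⊥_∞^a` on each `Mₙ(V)⁺`. -/
def IsAbsolute : Prop :=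
  ∀ n, ∀ u ∈ A.pos n, ∀ v ∈ A.pos n, (A.Perp u v ↔ A.PerpInfA u v)

/-- `p` is an order projection in `Mₙ(V)`: `p* = p` and `|2p − eⁿ| = eⁿ`. -/
def IsOP (n : ℕ) (p : Matrix (Fin n) (Fin n) V) : Prop :=
  mstar p = p ∧ A.abs n n ((2 : ℂ) • p - A.eN n) = A.eN n

/-- `v ∈ M_{m,n}(V)` is a partial isometry: `|v|` and `|v*|` are order projections. -/
def IsPI {m n : ℕ} (v : Matrix (Fin m) (Fin n) V) : Prop :=
  A.IsOP n (A.abs m n v) ∧ A.IsOP m (A.abs n m (mstar v))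

end AMOUS

/-- An element of `M_∞(V)`: a matrix at some level `n`. -/
def OPE (V : Type*) : Type _ := Σ n : ℕ, Matrix (Fin n) (Fin n) V

namespace OPE

variable {V : Type*} [AddCommGroup V] [Module ℂ V] [StarAddMonoid V] [StarModule ℂ V]

/-- Direct sum in `M_∞(V)`. -/
def d (p q : OPE V) : OPE V := ⟨p.1 + q.1, dsum p.2 q.2⟩

/-- The zero order projection (at level 1). -/
def zero (V : Type*) [AddCommGroup V] : OPE V := ⟨1, 0⟩

end OPE

namespace AMOUS

variable {V : Type*} [AddCommGroup V] [Module ℂ V] [StarAddMonoid V] [StarModule ℂ V]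
variable (A : AMOUS V)

/-- Membership in `𝒪𝒫_∞(V)`. -/
def IsOPE (p : OPE V) : Prop := A.IsOP p.1 p.2

/-- `eⁿ` as an element of `𝒪𝒫_∞(V)`. -/
def eOPE (n : ℕ) : OPE V := ⟨n, A.eN n⟩

/-- Partial isometric equivalence `p ∼ q` of order projections: there is a partial
isometry `v` with `p = |v*|` and `q = |v|`. -/
def Sim (p q : OPE V) : Prop :=
  ∃ v : Matrix (Fin p.1) (Fin q.1) V,
    A.IsPI v ∧ p.2 = A.abs q.1 p.1 (mstar v) ∧ q.2 = A.abs p.1 q.1 v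

/-- Condition (T). -/
def CondT : Prop :=
  ∀ (m n l : ℕ) (u : Matrix (Fin m) (Fin n) V) (v : Matrix (Fin l) (Fin n) V),
    A.IsPI u → A.IsPI v → A.abs m n u = A.abs l n v →
    ∃ w : Matrix (Fin m) (Fin l) V, A.IsPI w ∧
      A.abs l m (mstar w) = A.abs n m (mstar u) ∧ A.abs m l w = A.abs n l (mstar v)

/-- Stabilized equivalence `p ≈ q`: `p ⊕ r ∼ q ⊕ r` for some order projection `r`. -/
def ASim (p q : OPE V) : Prop := ∃ r : OPE V, A.IsOPE r ∧ A.Sim (p.d r) (q.d r)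

/-- A pair of order projections, representing an element `[(p,q)]` of `K₀(V)`. -/
def IsOPPair (x : OPE V × OPE V) : Prop := A.IsOPE x.1 ∧ A.IsOPE x.2

/-- The relation `(p₁,q₁) ≡ (p₂,q₂) ↔ p₁ ⊕ q₂ ≈ p₂ ⊕ q₁` defining `K₀(V)`. -/
def Krel (x y : OPE V × OPE V) : Prop := A.ASim (x.1.d y.2) (y.1.d x.2)

/-- Addition of representatives of `K₀(V)` classes. -/
def kadd (x y : OPE V × OPE V) : OPE V × OPE V := (x.1.d y.1, x.2.d y.2)

/-- The representative of the zero class of `K₀(V)`. -/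
def kzero : OPE V × OPE V := (OPE.zero V, OPE.zero V)

/-- Representative-level membership in the cone `K₀(V)⁺ = {[(p,0)] : p ∈ 𝒪𝒫_∞(V)}`. -/
def KPos (x : OPE V × OPE V) : Prop :=
  ∃ p : OPE V, A.IsOPE p ∧ A.Krel x (p, OPE.zero V)

/-- Representative-level order `[x] ≤ [y]` in `K₀(V)`: `[y] − [x] ∈ K₀(V)⁺`. -/
def Kle (x y : OPE V × OPE V) : Prop :=
  ∃ r : OPE V, A.IsOPE r ∧ A.Krel (kadd x (r, OPE.zero V)) y

/-- The order projection `p ∈ Mₙ(V)` is finite: `q ∼ p` and `q ≥ p` imply `q = p`. -/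
def FiniteOP (n : ℕ) (p : Matrix (Fin n) (Fin n) V) : Prop :=
  ∀ q : Matrix (Fin n) (Fin n) V, A.IsOP n q → A.Sim ⟨n, q⟩ ⟨n, p⟩ →
    q - p ∈ A.pos n → q = p

end AMOUS

/-! ### Maps between absolute matrix order unit spaces -/

section Maps

variable {V W : Type*} [AddCommGroup V] [Module ℂ V] [StarAddMonoid V] [StarModule ℂ V]
  [AddCommGroup W] [Module ℂ W] [StarAddMonoid W] [StarModule ℂ W]

/-- The amplification `φₙ` (entrywise application) of a map. -/
def mmap (φ : V →ₗ[ℂ] W) {m n : ℕ} (v : Matrix (Fin m) (Fin n) V) :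
    Matrix (Fin m) (Fin n) W :=
  fun i j => φ (v i j)

/-- `φ` is completely `|·|`-preserving: every amplification `φₙ` is `|·|`-preserving. -/
def CAbsPres (A : AMOUS V) (B : AMOUS W) (φ : V →ₗ[ℂ] W) : Prop :=
  ∀ (n : ℕ) (v : Matrix (Fin n) (Fin n) V), B.abs n n (mmap φ v) = mmap φ (A.abs n n v)

/-- `φ` and `ψ` are completely orthogonal: `φₙ(u) ⊥ ψₙ(v)` for all positive `u, v`. -/
def COrth (A : AMOUS V) (B : AMOUS W) (φ ψ : V →ₗ[ℂ] W) : Prop :=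
  ∀ (n : ℕ) (u v : Matrix (Fin n) (Fin n) V), u ∈ A.pos n → v ∈ A.pos n →
    B.Perp (mmap φ u) (mmap ψ v)

/-- The image of an element of `M_∞(V)` under (the amplifications of) `φ`. -/
def mmapOPE (φ : V →ₗ[ℂ] W) (p : OPE V) : OPE W := ⟨p.1, mmap φ p.2⟩

/-- `F` represents a group homomorphism `K₀(V) → K₀(W)` making the `K₀` diagram of `φ`
commute: it maps `K₀`-representatives to `K₀`-representatives, respects the defining
relation `≡`, is additive, and satisfies `F([(p, 0)]) = [(φ(p), 0)]`. -/
def K0HomProp (A : AMOUS V) (B : AMOUS W) (φ : V →ₗ[ℂ] W)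
    (F : OPE V × OPE V → OPE W × OPE W) : Prop :=
  (∀ x, A.IsOPPair x → B.IsOPPair (F x)) ∧
  (∀ x y, A.IsOPPair x → A.IsOPPair y → A.Krel x y → B.Krel (F x) (F y)) ∧
  (∀ x y, A.IsOPPair x → A.IsOPPair y → B.Krel (F (AMOUS.kadd x y)) (AMOUS.kadd (F x) (F y))) ∧
  (∀ p : OPE V, A.IsOPE p → B.Krel (F (p, OPE.zero V)) (mmapOPE φ p, OPE.zero W))

/-- The completely bounded norm of `φ` with respect to the order unit matrix norms. -/
def cbNorm (A : AMOUS V) (B : AMOUS W) (φ : V →ₗ[ℂ] W) : ℝ :=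
  ⨆ n : ℕ, sInf {c : ℝ | 0 ≤ c ∧
    ∀ v : Matrix (Fin n) (Fin n) V, B.mnorm n (mmap φ v) ≤ c * A.mnorm n v}

end Maps
/-!
For self-adjoint `w` with `𝔍ₙ w 𝔍ₙ = w`, compressing `(k𝔢ⁿ, k𝔢ⁿ)ₙ⁺ + saₙ(w)` by `𝔍ₙ ± 𝔎ₙ*`, and
conversely `k𝔢ⁿ ± w` by `𝔍ₙ ± 𝔎ₙ`, shows that the block element is positive iff `k𝔢ⁿ ± w` are.
Hence `‖w‖ = inf {k > 0 : -k𝔢ⁿ ≤ w ≤ k𝔢ⁿ}` for every such `n`, an order-unit norm.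

If `‖𝔲 + 𝔳‖ = 1`, the Archimedean property gives `𝔲 + 𝔳 ≤ 𝔢ⁿ`. For `m = max(|k₁|, |k₂|)` we then
have `m𝔢ⁿ ∓ (k₁𝔲 + k₂𝔳) = m(𝔢ⁿ - 𝔲 - 𝔳) + (m ∓ k₁)𝔲 + (m ∓ k₂)𝔳 ≥ 0`, so `‖k₁𝔲 + k₂𝔳‖ ≤ m`.
Conversely, adding multiples of `𝔳` and `𝔢ⁿ - 𝔲 - 𝔳` to `k₁𝔲 + k₂𝔳 ≤ t𝔢ⁿ` gives
`(k₁ + p)𝔲 ≤ (t + p)𝔢ⁿ` with `p ≥ 0`, whence `k₁ ≤ t` as `‖𝔲‖ = 1`. Since `‖k𝔳‖ = |k|‖𝔳‖`, this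
is `𝔲 ⊥_∞ 𝔳`; the other implication is the case `k₁ = k₂ = 1`.
-/
section FMat

lemma isFin_zero : IsFin 0 := ⟨0, fun _ _ _ => rfl⟩

lemma isFin_JMat (n : ℕ) : IsFin (JMat n) :=
  ⟨n, fun i j h => if_neg (by omega)⟩

lemma isFin_KMat (n : ℕ) : IsFin (KMat n) :=
  ⟨n + n, fun i j h => if_neg (by omega)⟩

lemma isFin_eUnit (i j : ℕ) : IsFin (eUnit i j) :=
  ⟨max i j + 1, fun k l h => if_neg (by omega)⟩

lemma IsFin.fstar {a : FMat} (ha : IsFin a) : IsFin (fstar a) := by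
  obtain ⟨n, hn⟩ := ha
  exact ⟨n, fun i j h => by simp [_root_.fstar, hn j i h.symm]⟩

lemma IsFin.add {a b : FMat} (ha : IsFin a) (hb : IsFin b) : IsFin (a + b) := by
  obtain ⟨n, hn⟩ := ha
  obtain ⟨m, hm⟩ := hb
  exact ⟨max n m, fun i j h => by
    simp [hn i j (by omega), hm i j (by omega)]⟩

lemma IsFin.smul (c : ℂ) {a : FMat} (ha : IsFin a) : IsFin (c • a) := by
  obtain ⟨n, hn⟩ := ha
  exact ⟨n, fun i j h => by simp [hn i j h]⟩

lemma IsFin.fmul {a b : FMat} (ha : IsFin a) (hb : IsFin b) : IsFin (fmul a b) := by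
  obtain ⟨n, hn⟩ := ha
  obtain ⟨m, hm⟩ := hb
  refine ⟨max n m, fun i k h => ?_⟩
  rcases h with h | h
  · simp [_root_.fmul, hn i _ (Or.inl (le_of_max_le_left h))]
  · simp [_root_.fmul, hm _ k (Or.inr (le_of_max_le_right h))]

lemma fstar_add (a b : FMat) : fstar (a + b) = fstar a + fstar b := by
  funext i j; simp [fstar]

lemma fstar_smul (c : ℂ) (a : FMat) : fstar (c • a) = starRingEnd ℂ c • fstar a := by
  funext i j; simp [fstar]

lemma fstar_fstar (a : FMat) : fstar (fstar a) = a := by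
  funext i j; simp [fstar]

lemma fstar_JMat (n : ℕ) : fstar (JMat n) = JMat n := by
  funext i j
  by_cases hij : i = j <;> simp [fstar, JMat, hij, eq_comm]

lemma fstar_eUnit (i j : ℕ) : fstar (eUnit i j) = eUnit j i := by
  funext k l
  by_cases hk : k = j <;> simp [fstar, eUnit, hk, and_comm]

lemma fmul_smul (a : FMat) (c : ℂ) (b : FMat) : fmul a (c • b) = c • fmul a b := by
  funext i k
  simp only [fmul, Pi.smul_apply, smul_eq_mul, ← tsum_mul_left]
  exact tsum_congr fun j => by ring

lemma fmul_JMat_left (n : ℕ) (a : FMat) :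
    fmul (JMat n) a = fun i k => if i < n then a i k else 0 := by
  funext i k
  rw [fmul, tsum_eq_single i fun j hj => by simp [JMat, Ne.symm hj]]
  by_cases hi : i < n <;> simp [JMat, hi]

lemma fmul_JMat_right (a : FMat) (n : ℕ) :
    fmul a (JMat n) = fun i k => if k < n then a i k else 0 := by
  funext i k
  rw [fmul, tsum_eq_single k fun j hj => by simp [JMat, hj]]
  by_cases hk : k < n <;> simp [JMat, hk]

lemma fmul_KMat_left (n : ℕ) (a : FMat) :
    fmul (KMat n) a = fun i k => if i < n then a (i + n) k else 0 := by
  funext i k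
  rw [fmul, tsum_eq_single (i + n) fun j hj => by simp [KMat, hj]]
  by_cases hi : i < n <;> simp [KMat, hi]

lemma fmul_JMat_JMat (m n : ℕ) : fmul (JMat m) (JMat n) = JMat (min m n) := by
  funext i k
  simp only [fmul_JMat_left, JMat]
  split_ifs <;> first | rfl | omega

lemma fmul_KMat_JMat (n : ℕ) : fmul (KMat n) (JMat n) = 0 := by
  funext i k
  simp only [fmul_JMat_right, KMat, Pi.zero_apply]
  split_ifs <;> first | rfl | omega

lemma fmul_JMat_fstar_KMat (n : ℕ) : fmul (JMat n) (fstar (KMat n)) = 0 := by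
  funext i k
  simp only [fmul_JMat_left, fstar, KMat, Pi.zero_apply, apply_ite (starRingEnd ℂ), map_one,
    map_zero]
  split_ifs <;> first | rfl | omega

lemma fmul_KMat_fstar_KMat (n : ℕ) : fmul (KMat n) (fstar (KMat n)) = JMat n := by
  funext i k
  simp only [fmul_KMat_left, fstar, KMat, JMat, apply_ite (starRingEnd ℂ), map_one, map_zero]
  split_ifs <;> first | rfl | omega

lemma fmul_JMat_eUnit (n i : ℕ) :
    fmul (JMat n) (eUnit i 0) = if i < n then eUnit i 0 else 0 := by
  funext k l
  simp only [fmul_JMat_left, apply_ite (fun a : FMat => a k l), eUnit, Pi.zero_apply]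
  split_ifs <;> first | rfl | omega

lemma fmul_eUnit_JMat {n i : ℕ} (h : i < n) : fmul (eUnit 0 i) (JMat n) = eUnit 0 i := by
  funext k l
  simp only [fmul_JMat_right, eUnit]
  split_ifs <;> first | rfl | omega

end FMat

namespace FBimod

variable {V : Type*} [AddCommGroup V] [Module ℂ V] (M : FBimod V)

section Algebra

lemma zero_lsmul (v : V) : M.lsmul 0 v = 0 := by
  simpa using M.add_lsmul 0 0 v isFin_zero isFin_zero

lemma rsmul_zero (v : V) : M.rsmul v 0 = 0 := by
  simpa using M.rsmul_add' v 0 0 isFin_zero isFin_zero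

lemma lsmul_zero (a : FMat) : M.lsmul a 0 = 0 :=
  (AddMonoidHom.mk' (M.lsmul a) (M.lsmul_add a)).map_zero

lemma lsmul_sub (a : FMat) (u v : V) : M.lsmul a (u - v) = M.lsmul a u - M.lsmul a v :=
  (AddMonoidHom.mk' (M.lsmul a) (M.lsmul_add a)).map_sub u v

lemma zero_rsmul (a : FMat) : M.rsmul 0 a = 0 :=
  (AddMonoidHom.mk' (M.rsmul · a) (M.rsmul_add · · a)).map_zero

lemma rsmul_sub (u v : V) (a : FMat) : M.rsmul (u - v) a = M.rsmul u a - M.rsmul v a :=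
  (AddMonoidHom.mk' (M.rsmul · a) (M.rsmul_add · · a)).map_sub u v

lemma star_zero : M.star 0 = 0 := (AddMonoidHom.mk' M.star M.star_add).map_zero

lemma star_sub (u v : V) : M.star (u - v) = M.star u - M.star v :=
  (AddMonoidHom.mk' M.star M.star_add).map_sub u v

lemma lsmul_rsmul_lsmul_rsmul {a b c d : FMat} (ha : IsFin a) (hb : IsFin b) (hc : IsFin c)
    (hd : IsFin d) (v : V) :
    M.lsmul a (M.rsmul (M.lsmul b (M.rsmul v c)) d)
      = M.lsmul (fmul a b) (M.rsmul v (fmul c d)) := by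
  rw [M.lsmul_rsmul b _ d hb hd, ← M.rsmul_mul v c d hc hd, ← M.mul_lsmul a b _ ha hb]

lemma star_conj {a : FMat} (ha : IsFin a) (v : V) :
    M.star (M.conj a v) = M.conj a (M.star v) := by
  rw [conj, M.star_lsmul _ _ ha.fstar, M.star_rsmul _ _ ha, fstar_fstar,
    M.lsmul_rsmul _ _ _ ha.fstar ha, conj]

lemma lsmul_JMat_rsmul_JMat (n : ℕ) (v : V) :
    M.lsmul (JMat n) (M.rsmul v (JMat n)) = M.cut n v :=
  rfl

lemma cut_add (n : ℕ) (u v : V) : M.cut n (u + v) = M.cut n u + M.cut n v := by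
  rw [cut, M.rsmul_add, M.lsmul_add, cut, cut]

lemma cut_zero (n : ℕ) : M.cut n 0 = 0 := by
  rw [cut, zero_rsmul, lsmul_zero]

lemma cut_cut (m n : ℕ) (v : V) : M.cut m (M.cut n v) = M.cut (min m n) v := by
  rw [cut, cut, M.lsmul_rsmul_lsmul_rsmul (isFin_JMat m) (isFin_JMat n) (isFin_JMat n)
    (isFin_JMat m), fmul_JMat_JMat, fmul_JMat_JMat, min_comm n m, cut]

lemma cut_ord (v : V) : M.cut (M.ord v) v = v := Nat.sInf_mem (M.nondeg v)

variable {M}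

lemma ord_le {n : ℕ} {v : V} (hv : M.cut n v = v) : M.ord v ≤ n := Nat.sInf_le hv

lemma cut_eq_of_le {n m : ℕ} {v : V} (hv : M.cut n v = v) (h : n ≤ m) : M.cut m v = v := by
  rw [← hv, cut_cut, min_eq_right h]

lemma lsmul_JMat_of_cut_eq {n : ℕ} {v : V} (hv : M.cut n v = v) : M.lsmul (JMat n) v = v := by
  conv_lhs => rw [← hv, cut]
  rw [← M.mul_lsmul _ _ _ (isFin_JMat n) (isFin_JMat n), fmul_JMat_JMat, min_self]
  exact hv

lemma rsmul_JMat_of_cut_eq {n : ℕ} {v : V} (hv : M.cut n v = v) : M.rsmul v (JMat n) = v := by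
  conv_lhs => rw [← hv, cut]
  rw [M.lsmul_rsmul _ _ _ (isFin_JMat n) (isFin_JMat n),
    ← M.rsmul_mul _ _ _ (isFin_JMat n) (isFin_JMat n), fmul_JMat_JMat, min_self]
  exact hv

lemma cut_star {n : ℕ} {v : V} (hv : M.cut n v = v) : M.cut n (M.star v) = M.star v := by
  conv_rhs => rw [← hv, cut]
  rw [M.star_lsmul _ _ (isFin_JMat n), M.star_rsmul _ _ (isFin_JMat n), fstar_JMat,
    M.lsmul_rsmul _ _ _ (isFin_JMat n) (isFin_JMat n), cut]

-- The bimodule axioms only relate the actions to scalars through `smul_compat`; linearity over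
-- `ℂ` follows because every vector is fixed by some compression `𝔍ₘ · 𝔍ₘ`.
lemma lsmul_smul {a : FMat} (ha : IsFin a) (c : ℂ) (v : V) :
    M.lsmul a (c • v) = c • M.lsmul a v := by
  obtain ⟨m, hm⟩ := M.nondeg v
  have hJ := isFin_JMat m
  rw [← M.smul_compat c m v hm, ← M.mul_lsmul a _ v ha (hJ.smul c), fmul_smul,
    M.smul_lsmul c _ v (ha.fmul hJ), M.mul_lsmul a _ v ha hJ, lsmul_JMat_of_cut_eq hm]

lemma rsmul_smul (c : ℂ) (v : V) {a : FMat} (ha : IsFin a) :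
    M.rsmul (c • v) a = c • M.rsmul v a := by
  obtain ⟨m, hm⟩ := M.nondeg v
  have hJ := isFin_JMat m
  rw [← M.smul_compat c m v hm, M.lsmul_rsmul _ v a (hJ.smul c) ha, M.smul_lsmul c _ _ hJ,
    ← M.lsmul_rsmul _ v a hJ ha, lsmul_JMat_of_cut_eq hm]

lemma star_smul (c : ℂ) (v : V) : M.star (c • v) = starRingEnd ℂ c • M.star v := by
  obtain ⟨m, hm⟩ := M.nondeg v
  rw [← M.smul_compat c m v hm, M.star_lsmul _ _ ((isFin_JMat m).smul c), fstar_smul,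
    fstar_JMat, M.smul_rsmul _ _ _ (isFin_JMat m), rsmul_JMat_of_cut_eq (cut_star hm)]

lemma star_ofReal_smul (k : ℝ) (v : V) : M.star ((k : ℂ) • v) = (k : ℂ) • M.star v := by
  rw [star_smul, Complex.conj_ofReal]

lemma cut_smul (n : ℕ) (c : ℂ) (v : V) : M.cut n (c • v) = c • M.cut n v := by
  rw [cut, rsmul_smul c v (isFin_JMat n), lsmul_smul (isFin_JMat n), cut]

end Algebra

section Epow

lemma epow_zero (e : V) : M.epow e 0 = 0 := Finset.sum_range_zero _

lemma epow_succ (e : V) (n : ℕ) : M.epow e (n + 1) = M.epow e n + M.conj (eUnit 0 n) e := by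
  rw [epow, Finset.sum_range_succ, conj, fstar_eUnit, epow]

lemma cut_conj_eUnit (n i : ℕ) (e : V) :
    M.cut n (M.conj (eUnit 0 i) e) = if i < n then M.conj (eUnit 0 i) e else 0 := by
  rw [cut, conj, fstar_eUnit, M.lsmul_rsmul_lsmul_rsmul (isFin_JMat n) (isFin_eUnit i 0)
    (isFin_eUnit 0 i) (isFin_JMat n), fmul_JMat_eUnit]
  split_ifs with h
  · rw [fmul_eUnit_JMat h]
  · rw [zero_lsmul]

lemma cut_epow (n m : ℕ) (e : V) : M.cut n (M.epow e m) = M.epow e (min n m) := by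
  induction m with
  | zero => rw [epow_zero, cut_zero, Nat.min_zero, epow_zero]
  | succ m ih =>
    rw [epow_succ, cut_add, ih, cut_conj_eUnit]
    split_ifs with h
    · rw [min_eq_right h.le, min_eq_right h, epow_succ]
    · rw [min_eq_left (not_lt.mp h), min_eq_left (by omega), add_zero]

variable {M}

lemma star_epow {e : V} (he : M.star e = e) (n : ℕ) : M.star (M.epow e n) = M.epow e n := by
  induction n with
  | zero => rw [epow_zero, star_zero]
  | succ n ih => rw [epow_succ, M.star_add, ih, M.star_conj (isFin_eUnit 0 n), he]

end Epow

section Block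

variable {M}

lemma conj_pairPlus_add_san {n : ℕ} {z w : V} (hz : M.cut n z = z) (hw : M.cut n w = w)
    (c : ℂ) :
    M.conj (JMat n + c • fstar (KMat n)) (M.pairPlus n z z + M.san n w)
      = (z + c • w) + starRingEnd ℂ c • (M.star w + c • z) := by
  have hJ := isFin_JMat n
  have hK := isFin_KMat n
  have hK' := hK.fstar
  have hX : M.pairPlus n z z + M.san n w = M.lsmul (JMat n) (M.rsmul z (JMat n)) +
      M.lsmul (fstar (KMat n)) (M.rsmul z (KMat n)) + M.san n w := by
    rw [pairPlus, lsmul_JMat_rsmul_JMat, hz]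
  rw [hX, conj, san, fstar_add, fstar_smul, fstar_fstar, fstar_JMat,
    M.rsmul_add' _ _ _ hJ (hK'.smul c), M.add_lsmul _ _ _ hJ (hK.smul _)]
  simp only [M.rsmul_add, M.lsmul_add, M.smul_rsmul _ _ _ hK', M.smul_lsmul _ _ _ hK,
    lsmul_smul hJ, lsmul_smul hK, M.lsmul_rsmul_lsmul_rsmul, isFin_JMat, isFin_KMat,
    IsFin.fstar, fmul_JMat_JMat, min_self, fmul_JMat_fstar_KMat, fmul_KMat_JMat,
    fmul_KMat_fstar_KMat, zero_lsmul, rsmul_zero, lsmul_zero, smul_zero, add_zero, zero_add]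
  simp only [lsmul_JMat_rsmul_JMat, hz, hw, cut_star hw]
  module

lemma two_smul_pairPlus_add_san {n : ℕ} {z w : V} (hz : M.cut n z = z) (hw : M.cut n w = w)
    (hws : M.star w = w) :
    (2 : ℂ) • (M.pairPlus n z z + M.san n w)
      = M.conj (JMat n + KMat n) (z + w) + M.conj (JMat n + (-1 : ℂ) • KMat n) (z - w) := by
  have hJ := isFin_JMat n
  have hK := isFin_KMat n
  have hK' := hK.fstar
  simp only [conj, pairPlus, san, hws, fstar_add, fstar_smul, fstar_JMat, map_neg, map_one,
    M.rsmul_add' _ _ _ hJ hK, M.rsmul_add' _ _ _ hJ (hK.smul _), M.add_lsmul _ _ _ hJ hK',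
    M.add_lsmul _ _ _ hJ (hK'.smul _), M.smul_rsmul _ _ _ hK, M.smul_lsmul _ _ _ hK',
    M.lsmul_add, M.rsmul_add, lsmul_sub, rsmul_sub, lsmul_smul hJ, lsmul_smul hK',
    lsmul_JMat_rsmul_JMat, hz, hw]
  module

end Block

namespace IsCone

variable {M} {C : Set V} (hC : M.IsCone C)
include hC

lemma star_eq {x : V} (hx : x ∈ C) : M.star x = x := hC.1 x hx

lemma add_mem {x y : V} (hx : x ∈ C) (hy : y ∈ C) : x + y ∈ C := hC.2.1 x hx y hy

lemma conj_mem {x : V} (hx : x ∈ C) {a : FMat} (ha : IsFin a) : M.conj a x ∈ C :=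
  hC.2.2 x hx a ha

lemma cut_mem {x : V} (hx : x ∈ C) (n : ℕ) : M.cut n x ∈ C := by
  have := hC.conj_mem hx (isFin_JMat n)
  rwa [conj, fstar_JMat] at this

lemma smul_mem {t : ℝ} (ht : 0 ≤ t) {x : V} (hx : x ∈ C) : (t : ℂ) • x ∈ C := by
  obtain ⟨m, hm⟩ := M.nondeg x
  have hJ := isFin_JMat m
  convert hC.conj_mem hx (hJ.smul (√t : ℂ)) using 1
  rw [conj, fstar_smul, Complex.conj_ofReal, fstar_JMat, M.smul_rsmul _ _ _ hJ,
    M.smul_lsmul _ _ _ hJ, lsmul_smul hJ, smul_smul, ← Complex.ofReal_mul,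
    Real.mul_self_sqrt ht, hm]

lemma zero_mem {x : V} (hx : x ∈ C) : (0 : V) ∈ C := by
  simpa using hC.smul_mem le_rfl hx

lemma smul_mem_iff {c : ℝ} (hc : 0 < c) {x : V} : (c : ℂ) • x ∈ C ↔ x ∈ C := by
  refine ⟨fun hx => ?_, hC.smul_mem hc.le⟩
  have := hC.smul_mem (inv_nonneg.mpr hc.le) hx
  rwa [smul_smul, ← Complex.ofReal_mul, inv_mul_cancel₀ hc.ne', Complex.ofReal_one,
    one_smul] at this

lemma epow_sub_epow_mem {e : V} (he : e ∈ C) {n m : ℕ} (h : n ≤ m) :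
    M.epow e m - M.epow e n ∈ C := by
  induction m, h using Nat.le_induction with
  | base => simpa using hC.zero_mem he
  | succ m _ ih =>
    rw [epow_succ, add_sub_right_comm]
    exact hC.add_mem ih (hC.conj_mem he (isFin_eUnit 0 m))

lemma epow_mem {e : V} (he : e ∈ C) (n : ℕ) : M.epow e n ∈ C := by
  simpa [epow_zero] using hC.epow_sub_epow_mem he (Nat.zero_le n)

lemma pairPlus_add_san_mem_iff {n : ℕ} {z w : V}
    (hz : M.cut n z = z) (hw : M.cut n w = w) (hws : M.star w = w) :
    M.pairPlus n z z + M.san n w ∈ C ↔ z + w ∈ C ∧ z - w ∈ C := by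
  have hJ := isFin_JMat n
  have hK := isFin_KMat n
  constructor
  · intro hB
    have hplus := hC.conj_mem hB (hJ.add (hK.fstar.smul 1))
    have hminus := hC.conj_mem hB (hJ.add (hK.fstar.smul (-1)))
    rw [conj_pairPlus_add_san hz hw, hws] at hplus hminus
    refine ⟨(hC.smul_mem_iff two_pos).1 ?_, (hC.smul_mem_iff two_pos).1 ?_⟩
    · convert hplus using 1
      simp only [map_one]
      push_cast
      module
    · convert hminus using 1
      simp only [map_neg, map_one]
      push_cast
      module
  · rintro ⟨hplus, hminus⟩
    refine (hC.smul_mem_iff two_pos).1 ?_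
    rw [Complex.ofReal_ofNat, two_smul_pairPlus_add_san hz hw hws]
    exact hC.add_mem (hC.conj_mem hplus (hJ.add hK)) (hC.conj_mem hminus (hJ.add (hK.smul _)))

end IsCone

section Norm

open Pointwise

def orderBounds (C : Set V) (e : V) (n : ℕ) (w : V) : Set ℝ :=
  {k | 0 < k ∧ (k : ℂ) • M.epow e n + w ∈ C ∧ (k : ℂ) • M.epow e n - w ∈ C}

variable {M}

lemma orderBounds_neg (C : Set V) (e : V) (n : ℕ) (w : V) :
    M.orderBounds C e n (-w) = M.orderBounds C e n w := by
  ext t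
  simp only [orderBounds, Set.mem_ofPred_eq, ← sub_eq_add_neg, sub_neg_eq_add, and_comm]

namespace IsCone

variable {C : Set V} {e : V} (hC : M.IsCone C)
include hC

lemma smul_epow_add_mem_iff_of_le (he : e ∈ C) {n m : ℕ} (h : n ≤ m) {w : V}
    (hw : M.cut n w = w) {t : ℝ} (ht : 0 ≤ t) :
    (t : ℂ) • M.epow e m + w ∈ C ↔ (t : ℂ) • M.epow e n + w ∈ C := by
  constructor
  · intro hm
    have := hC.cut_mem hm n
    rwa [cut_add, cut_smul, cut_epow, min_eq_left h, hw] at this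
  · intro hn
    convert hC.add_mem hn (hC.smul_mem ht (hC.epow_sub_epow_mem he h)) using 1
    module

lemma orderBounds_of_le (he : e ∈ C) {n m : ℕ} (h : n ≤ m) {w : V} (hw : M.cut n w = w) :
    M.orderBounds C e m w = M.orderBounds C e n w := by
  have hw' : M.cut n (-w) = -w := by rw [← neg_one_smul ℂ w, cut_smul, hw]
  ext t
  simp only [orderBounds, Set.mem_ofPred_eq, sub_eq_add_neg]
  exact and_congr_right fun ht => and_congr (hC.smul_epow_add_mem_iff_of_le he h hw ht.le)
    (hC.smul_epow_add_mem_iff_of_le he h hw' ht.le)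

lemma lnorm_eq (he : e ∈ C) {w : V} (hws : M.star w = w) {n : ℕ} (hw : M.cut n w = w) :
    M.lnorm C e w = sInf (M.orderBounds C e n w) := by
  rw [hC.orderBounds_of_le he (ord_le hw) (M.cut_ord w), lnorm]
  congr 1
  ext k
  refine and_congr_right fun _ => hC.pairPlus_add_san_mem_iff ?_ (M.cut_ord w) hws
  rw [cut_smul, cut_epow, min_self]

lemma lnorm_zero (he : e ∈ C) : M.lnorm C e 0 = 0 := by
  rw [hC.lnorm_eq he M.star_zero (M.cut_zero 0)]
  have hS : M.orderBounds C e 0 0 = Set.Ioi 0 := by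
    ext t
    simpa [orderBounds, epow_zero] using fun _ => hC.zero_mem he
  rw [hS, csInf_Ioi]

lemma orderBounds_smul {w : V} {k : ℝ} (hk : 0 < k) (n : ℕ) :
    M.orderBounds C e n ((k : ℂ) • w) = k • M.orderBounds C e n w := by
  ext t
  rw [Set.mem_smul_set_iff_inv_smul_mem₀ hk.ne', smul_eq_mul]
  have hscale : ∀ x : V, (t : ℂ) • M.epow e n + (k : ℂ) • x
      = (k : ℂ) • (((k⁻¹ * t : ℝ) : ℂ) • M.epow e n + x) := fun x => by
    rw [smul_add, smul_smul, ← Complex.ofReal_mul, mul_inv_cancel_left₀ hk.ne']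
  simp only [orderBounds, Set.mem_ofPred_eq, sub_eq_add_neg, ← smul_neg, hscale,
    hC.smul_mem_iff hk, mul_pos_iff_of_pos_left (inv_pos.2 hk)]

lemma lnorm_smul (he : e ∈ C) {w : V} (hws : M.star w = w) (k : ℝ) :
    M.lnorm C e ((k : ℂ) • w) = |k| * M.lnorm C e w := by
  rcases eq_or_ne k 0 with rfl | hk
  · rw [Complex.ofReal_zero, zero_smul, abs_zero, zero_mul, hC.lnorm_zero he]
  have hw := M.cut_ord w
  have hkw : M.cut (M.ord w) ((k : ℂ) • w) = (k : ℂ) • w := by rw [cut_smul, hw]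
  have hS : M.orderBounds C e (M.ord w) ((k : ℂ) • w)
      = |k| • M.orderBounds C e (M.ord w) w := by
    rcases hk.lt_or_gt with hk | hk
    · rw [show (k : ℂ) • w = ((|k| : ℝ) : ℂ) • -w by
          rw [abs_of_neg hk]; push_cast; module,
        hC.orderBounds_smul (abs_pos.2 hk.ne), orderBounds_neg]
    · rw [abs_of_pos hk, hC.orderBounds_smul hk]
  rw [hC.lnorm_eq he (by rw [star_ofReal_smul, hws]) hkw, hC.lnorm_eq he hws hw, hS,
    Real.sInf_smul_of_nonneg (abs_nonneg k), smul_eq_mul]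

lemma sInf_orderBounds_smul_epow_sub_mem (he : e ∈ C) (harch : M.ConeArch C) {n : ℕ} {w : V}
    (hws : M.star w = w) (hne : (M.orderBounds C e n w).Nonempty) :
    ((sInf (M.orderBounds C e n w) : ℝ) : ℂ) • M.epow e n - w ∈ C := by
  set a := sInf (M.orderBounds C e n w)
  refine harch _ (hC.epow_mem he n) _ ?_ fun k hk => ?_
  · rw [star_sub, star_ofReal_smul, star_epow (hC.star_eq he), hws]
  · obtain ⟨s, ⟨-, -, hs⟩, hsk⟩ := exists_lt_of_csInf_lt hne (lt_add_of_pos_right a hk)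
    have hgap := hC.smul_mem (sub_nonneg.2 hsk.le) (hC.epow_mem he n)
    convert hC.add_mem hs hgap using 1
    push_cast
    module

lemma mul_lnorm_le_of_smul_epow_sub_smul_mem (he : e ∈ C) {n : ℕ} {u : V} (hu : u ∈ C)
    (hun : M.cut n u = u) {c d : ℝ} (hc : 0 < c) (hd : 0 < d)
    (h : (c : ℂ) • M.epow e n - (d : ℂ) • u ∈ C) : d * M.lnorm C e u ≤ c := by
  have hplus : ((c / d : ℝ) : ℂ) • M.epow e n + u ∈ C :=
    hC.add_mem (hC.smul_mem (div_pos hc hd).le (hC.epow_mem he n)) hu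
  have hminus : ((c / d : ℝ) : ℂ) • M.epow e n - u ∈ C := by
    rw [← hC.smul_mem_iff hd]
    convert h using 1
    rw [smul_sub, smul_smul, ← Complex.ofReal_mul, mul_div_cancel₀ c hd.ne']
  rw [← le_div_iff₀' hd, hC.lnorm_eq he (hC.star_eq hu) hun]
  exact csInf_le ⟨0, fun _ hk => hk.1.le⟩ ⟨div_pos hc hd, hplus, hminus⟩

section Orthogonality

variable (he : e ∈ C) {n : ℕ} {u v : V} (hu : u ∈ C) (hv : v ∈ C)
  (hE : M.epow e n - (u + v) ∈ C)
include he hu hv hE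

lemma smul_epow_sub_mem_of_max_abs_le {k₁ k₂ t : ℝ} (h : max |k₁| |k₂| ≤ t) :
    (t : ℂ) • M.epow e n - ((k₁ : ℂ) • u + (k₂ : ℂ) • v) ∈ C := by
  set m := max |k₁| |k₂|
  have h₁ : 0 ≤ m - k₁ := sub_nonneg.2 ((le_abs_self k₁).trans (le_max_left _ _))
  have h₂ : 0 ≤ m - k₂ := sub_nonneg.2 ((le_abs_self k₂).trans (le_max_right _ _))
  have hm : 0 ≤ m := (abs_nonneg k₁).trans (le_max_left _ _)
  have hsum := hC.add_mem (hC.add_mem (hC.add_mem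
    (hC.smul_mem (sub_nonneg.2 h) (hC.epow_mem he n)) (hC.smul_mem hm hE))
    (hC.smul_mem h₁ hu)) (hC.smul_mem h₂ hv)
  convert hsum using 1
  push_cast
  module

lemma le_of_smul_epow_sub_mem (hun : M.cut n u = u) (hnu : M.lnorm C e u = 1)
    {k₁ k₂ t : ℝ} (ht : 0 < t)
    (h : (t : ℂ) • M.epow e n - ((k₁ : ℂ) • u + (k₂ : ℂ) • v) ∈ C) :
    k₁ ≤ t := by
  rcases le_or_gt k₁ 0 with hk₁ | hk₁
  · linarith
  -- With `k₂ = q - p`, `p, q ≥ 0`, adding `p (𝔢ⁿ - (u + v)) + q v` removes the `v`-part.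
  obtain ⟨p, q, hp, hq, rfl⟩ : ∃ p q : ℝ, 0 ≤ p ∧ 0 ≤ q ∧ k₂ = q - p :=
    ⟨max (-k₂) 0, max k₂ 0, le_max_right _ _, le_max_right _ _, by
      rcases le_total k₂ 0 with h | h <;> simp [h]⟩
  have hsum := hC.add_mem (hC.add_mem h (hC.smul_mem hp hE)) (hC.smul_mem hq hv)
  have key := hC.mul_lnorm_le_of_smul_epow_sub_smul_mem he hu hun (c := t + p) (d := k₁ + p)
    (by positivity) (by positivity) (by convert hsum using 1; push_cast; module)
  rw [hnu, mul_one] at key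
  linarith

lemma lnorm_smul_add_smul (hun : M.cut n u = u) (hvn : M.cut n v = v)
    (hnu : M.lnorm C e u = 1) (hnv : M.lnorm C e v = 1) (k₁ k₂ : ℝ) :
    M.lnorm C e ((k₁ : ℂ) • u + (k₂ : ℂ) • v) = max |k₁| |k₂| := by
  set w := (k₁ : ℂ) • u + (k₂ : ℂ) • v
  have hmem : ∀ t, t ∈ M.orderBounds C e n w ↔ 0 < t ∧
      (t : ℂ) • M.epow e n -
        (((-k₁ : ℝ) : ℂ) • u + ((-k₂ : ℝ) : ℂ) • v) ∈ C ∧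
        (t : ℂ) • M.epow e n - w ∈ C := fun t => by
    rw [show ((-k₁ : ℝ) : ℂ) • u + ((-k₂ : ℝ) : ℂ) • v = -w by push_cast; module,
      sub_neg_eq_add]
    rfl
  have hupper : ∀ t, max |k₁| |k₂| < t → t ∈ M.orderBounds C e n w :=
    fun t ht => (hmem t).2 ⟨((abs_nonneg k₁).trans (le_max_left _ _)).trans_lt ht,
      hC.smul_epow_sub_mem_of_max_abs_le he hu hv hE (by simpa only [abs_neg] using ht.le),
      hC.smul_epow_sub_mem_of_max_abs_le he hu hv hE ht.le⟩
  have hE' : M.epow e n - (v + u) ∈ C := by rwa [add_comm v u]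
  have hlower : ∀ t ∈ M.orderBounds C e n w, max |k₁| |k₂| ≤ t := by
    intro t ht
    obtain ⟨ht, hminus, hplus⟩ := (hmem t).1 ht
    have hu₁ := hC.le_of_smul_epow_sub_mem he hu hv hE hun hnu ht hplus
    have hu₂ := hC.le_of_smul_epow_sub_mem he hu hv hE hun hnu ht hminus
    rw [add_comm] at hminus
    rw [show w = (k₂ : ℂ) • v + (k₁ : ℂ) • u from add_comm _ _] at hplus
    have hv₁ := hC.le_of_smul_epow_sub_mem he hv hu hE' hvn hnv ht hplus
    have hv₂ := hC.le_of_smul_epow_sub_mem he hv hu hE' hvn hnv ht hminus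
    exact max_le (abs_le.2 ⟨by linarith, hu₁⟩) (abs_le.2 ⟨by linarith, hv₁⟩)
  have hws : M.star w = w := by
    rw [M.star_add, star_ofReal_smul, star_ofReal_smul, hC.star_eq hu, hC.star_eq hv]
  rw [hC.lnorm_eq he hws (by rw [cut_add, cut_smul, cut_smul, hun, hvn])]
  exact csInf_eq_of_forall_ge_of_forall_gt_exists_lt ⟨_, hupper _ (lt_add_one _)⟩ hlower
    fun r hr => ⟨_, hupper _ (left_lt_add_div_two.2 hr), add_div_two_lt_right.2 hr⟩

end Orthogonality

end IsCone

end Norm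

end FBimod

/-- In a local `𝔉`-order unit bimodule, for `𝔲, 𝔳 ∈ 𝔙⁺` with
`‖𝔲‖ = ‖𝔳‖ = 1`: `𝔲 ⊥_∞ 𝔳 ↔ ‖𝔲 + 𝔳‖ = 1`. -/
theorem statement9 {V : Type*} [AddCommGroup V] [Module ℂ V] (M : FBimod V) (C : Set V)
    (e : V) (h : M.IsLocalUnitBimod C e) (u v : V) (hu : u ∈ C) (hv : v ∈ C)
    (hnu : M.lnorm C e u = 1) (hnv : M.lnorm C e v = 1) :
    M.PerpInf C e u v ↔ M.lnorm C e (u + v) = 1 := by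
  obtain ⟨hC, -, harch, he, -⟩ := h
  set n := max (M.ord u) (M.ord v)
  have hun : M.cut n u = u := FBimod.cut_eq_of_le (M.cut_ord u) (le_max_left _ _)
  have hvn : M.cut n v = v := FBimod.cut_eq_of_le (M.cut_ord v) (le_max_right _ _)
  refine ⟨fun hperp => by simpa [hnu, hnv] using hperp 1 1, fun huv k₁ k₂ => ?_⟩
  have huvs : M.star (u + v) = u + v := by rw [M.star_add, hC.star_eq hu, hC.star_eq hv]
  have huvn : M.cut n (u + v) = u + v := by rw [FBimod.cut_add, hun, hvn]
  rw [hC.lnorm_eq he huvs huvn] at huv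
  have hE : M.epow e n - (u + v) ∈ C := by
    have hne : (M.orderBounds C e n (u + v)).Nonempty :=
      Set.nonempty_iff_ne_empty.2 fun hS => by simp [hS] at huv
    simpa [huv] using hC.sInf_orderBounds_smul_epow_sub_mem he harch huvs hne
  rw [hC.lnorm_smul he (hC.star_eq hu), hC.lnorm_smul he (hC.star_eq hv), hnu, hnv, mul_one,
    mul_one]
  exact hC.lnorm_smul_add_smul he hu hv hE hun hvn hnu hnv k₁ k₂
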